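/- Let X be an integrable random variable bounded from above, β₁, ..., βₙ ∈ (0,1) with β = Σᵢ βᵢ ∈ (0,1), t ≥ max(ess-sup X, 0), A an event with A = {U_X ≤ β} for a uniform transform U_X of X, and (A₁, ..., Aₙ) a measurable partition of A with P(Aᵢ) = βᵢ. Define Xᵢ = (X - t)·1_{Aᵢ} + (X/n)·1_{Aᶜ} + (t/(n-1))·1_{A \ Aᵢ}. Then Σᵢ Xᵢ = X and Σᵢ R_{[0,βᵢ] ∪ [1-β+βᵢ,1]}(Xᵢ) = R_{[0,β]}(X), so this allocation attains the inf-convolution. -/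

import Mathlib

/-!
The quantile function `q` of `Y`, viewed as a random variable on `(0, 1)`, has the law of `Y`,
so `∫₀¹ g ∘ q = 𝔼[g(Y)]`. If `D` is a lower tail event of `Y` at level `c` (`Y ≤ c` on `D`,
`Y ≥ c` off `D`) with `P(D) = p`, then `q ≤ c` on `(0, p]` and `q ≥ c` on `(p, 1)`; taking
`g = min (· - c) 0` and `g = max (· - c) 0` gives `∫₀ᵖ q = 𝔼[Y; D]` and `∫ₚ¹ q = 𝔼[Y; Dᶜ]`.

The event `A = {U_X ≤ β}` is a lower tail of `X` at level `q_X(β)`. Since `t` dominates `X`,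
for the share `Xᵢ` both `Aᵢ` (level `q_X(β) - t`) and `Aᵢ ∪ Aᶜ` (level `t / (n - 1)`) are lower
tails, so `β R(Xᵢ) = 𝔼[X - t; Aᵢ] + (β - βᵢ) t / (n - 1)`. Summing over `i` the constants cancel
and leave `𝔼[X; A] = β R_{[0,β]}(X)`.
-/

open MeasureTheory Set Filter

/-- Left `u`-quantile of a random variable `X` under measure `μ`. -/
noncomputable def leftQuantile {Ω : Type*} [MeasurableSpace Ω] (μ : Measure Ω)
    (X : Ω → ℝ) (u : ℝ) : ℝ :=
  sInf {x : ℝ | u ≤ (μ {ω | X ω ≤ x}).toReal}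

/-- Averaged quantile functional `R_I`. -/
noncomputable def avgQuantile {Ω : Type*} [MeasurableSpace Ω] (μ : Measure Ω)
    (X : Ω → ℝ) (I : Set ℝ) : ℝ :=
  (volume I).toReal⁻¹ * ∫ u in I, leftQuantile μ X u

open ProbabilityTheory

section Quantile

variable {u : ℝ}

lemma bddBelow_setOf_le_cdf (ν : Measure ℝ) [IsProbabilityMeasure ν] (hu : 0 < u) :
    BddBelow {x | u ≤ cdf ν x} := by
  obtain ⟨x₀, hx₀⟩ := ((tendsto_order.1 (tendsto_cdf_atBot ν)).2 u hu).exists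
  exact ⟨x₀, fun x hx => le_of_not_gt fun hlt => (hx.trans (monotone_cdf ν hlt.le)).not_gt hx₀⟩

lemma nonempty_setOf_le_cdf (ν : Measure ℝ) [IsProbabilityMeasure ν] (hu : u < 1) :
    {x | u ≤ cdf ν x}.Nonempty :=
  let ⟨x, hx⟩ := ((tendsto_order.1 (tendsto_cdf_atTop ν)).1 u hu).exists
  ⟨x, hx.le⟩

lemma sInf_setOf_le_cdf_le_iff (ν : Measure ℝ) [IsProbabilityMeasure ν] (hu0 : 0 < u)
    (hu1 : u < 1) {x : ℝ} : sInf {x | u ≤ cdf ν x} ≤ x ↔ u ≤ cdf ν x := by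
  refine ⟨fun h => le_trans ?_ (monotone_cdf ν h),
    fun h => csInf_le (bddBelow_setOf_le_cdf ν hu0) h⟩
  refine ge_of_tendsto ((cdf ν).right_continuous _ |>.mono Ioi_subset_Ici_self)
    (eventually_nhdsWithin_of_forall fun y hy => ?_)
  obtain ⟨z, hz, hzy⟩ := exists_lt_of_csInf_lt (nonempty_setOf_le_cdf ν hu1) hy
  exact hz.trans (monotone_cdf ν hzy.le)

variable {Ω : Type*} [MeasurableSpace Ω] {μ : Measure Ω} [IsProbabilityMeasure μ] {Y : Ω → ℝ}

lemma cdf_map_eq_measureReal (hY : AEMeasurable Y μ) (x : ℝ) :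
    cdf (μ.map Y) x = μ.real {ω | Y ω ≤ x} := by
  have := Measure.isProbabilityMeasure_map hY
  rw [cdf_eq_real, measureReal_def, measureReal_def,
    Measure.map_apply_of_aemeasurable hY measurableSet_Iic]
  rfl

lemma leftQuantile_eq_sInf_cdf (hY : AEMeasurable Y μ) (u : ℝ) :
    leftQuantile μ Y u = sInf {x | u ≤ cdf (μ.map Y) x} := by
  simp only [cdf_map_eq_measureReal hY]
  rfl

lemma leftQuantile_le_of_le_measureReal (hY : AEMeasurable Y μ) (hu : 0 < u) {x : ℝ}
    (h : u ≤ μ.real {ω | Y ω ≤ x}) : leftQuantile μ Y u ≤ x := by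
  have := Measure.isProbabilityMeasure_map hY
  rw [leftQuantile_eq_sInf_cdf hY]
  refine csInf_le (bddBelow_setOf_le_cdf _ hu) ?_
  rwa [mem_ofPred_eq, cdf_map_eq_measureReal hY]

lemma leftQuantile_le_iff (hY : AEMeasurable Y μ) (hu0 : 0 < u) (hu1 : u < 1) {x : ℝ} :
    leftQuantile μ Y u ≤ x ↔ u ≤ μ.real {ω | Y ω ≤ x} := by
  have := Measure.isProbabilityMeasure_map hY
  rw [leftQuantile_eq_sInf_cdf hY, sInf_setOf_le_cdf_le_iff _ hu0 hu1, cdf_map_eq_measureReal hY]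

lemma monotoneOn_leftQuantile (hY : AEMeasurable Y μ) :
    MonotoneOn (leftQuantile μ Y) (Ioo 0 1) := fun _ hu _ hv huv =>
  (leftQuantile_le_iff hY hu.1 hu.2).2 (huv.trans ((leftQuantile_le_iff hY hv.1 hv.2).1 le_rfl))

lemma aemeasurable_leftQuantile (hY : AEMeasurable Y μ) :
    AEMeasurable (leftQuantile μ Y) (volume.restrict (Ioo 0 1)) :=
  aemeasurable_restrict_of_monotoneOn measurableSet_Ioo (monotoneOn_leftQuantile hY)

lemma map_leftQuantile (hY : AEMeasurable Y μ) :
    (volume.restrict (Ioo 0 1)).map (leftQuantile μ Y) = μ.map Y := by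
  refine (Measure.ext_of_Iic _ _ fun x => ?_).symm
  rw [Measure.map_apply_of_aemeasurable (aemeasurable_leftQuantile hY) measurableSet_Iic,
    Measure.restrict_apply' measurableSet_Ioo,
    Measure.map_apply_of_aemeasurable hY measurableSet_Iic]
  set p := μ.real {ω | Y ω ≤ x}
  have hp : μ (Y ⁻¹' Iic x) = ENNReal.ofReal (p - 0) := by
    rw [sub_zero, ofReal_measureReal]; rfl
  refine le_antisymm ?_ ?_
  · rw [hp, ← Real.volume_Ioo]
    refine measure_mono fun u ⟨hu0, hup⟩ => ⟨?_, hu0, hup.trans_le measureReal_le_one⟩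
    exact (leftQuantile_le_iff hY hu0 (hup.trans_le measureReal_le_one)).2 hup.le
  · rw [hp, ← Real.volume_Ioc]
    exact measure_mono fun u ⟨hux, hu0, hu1⟩ => ⟨hu0, (leftQuantile_le_iff hY hu0 hu1).1 hux⟩

lemma integral_comp_leftQuantile (hY : AEMeasurable Y μ) {g : ℝ → ℝ} (hg : Measurable g) :
    ∫ u in Ioo 0 1, g (leftQuantile μ Y u) = ∫ ω, g (Y ω) ∂μ := by
  rw [← integral_map (aemeasurable_leftQuantile hY) hg.aestronglyMeasurable, map_leftQuantile hY,
    integral_map hY hg.aestronglyMeasurable]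

lemma integrableOn_leftQuantile (hY : Integrable Y μ) :
    IntegrableOn (leftQuantile μ Y) (Icc 0 1) := by
  rw [integrableOn_Icc_iff_integrableOn_Ioo, IntegrableOn,
    ← Function.id_comp (leftQuantile μ Y),
    ← integrable_map_measure aestronglyMeasurable_id (aemeasurable_leftQuantile hY.aemeasurable),
    map_leftQuantile hY.aemeasurable,
    integrable_map_measure aestronglyMeasurable_id hY.aemeasurable]
  exact hY

end Quantile

section LowerTail

variable {Ω : Type*} [MeasurableSpace Ω] {μ : Measure Ω} [IsProbabilityMeasure μ] {Y : Ω → ℝ}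
  {D : Set Ω} {c u : ℝ}

def IsLowerTail (μ : Measure Ω) (Y : Ω → ℝ) (D : Set Ω) (c : ℝ) : Prop :=
  ∀ᵐ ω ∂μ, (ω ∈ D → Y ω ≤ c) ∧ (ω ∉ D → c ≤ Y ω)

namespace IsLowerTail

lemma leftQuantile_le (h : IsLowerTail μ Y D c) (hY : AEMeasurable Y μ) (hu0 : 0 < u)
    (hu : u ≤ μ.real D) : leftQuantile μ Y u ≤ c := by
  refine leftQuantile_le_of_le_measureReal hY hu0 (hu.trans ?_)
  exact ENNReal.toReal_mono (measure_ne_top _ _) (measure_mono_ae (h.mono fun ω hω => hω.1))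

lemma le_leftQuantile (h : IsLowerTail μ Y D c) (hY : AEMeasurable Y μ) (hu : μ.real D < u)
    (hu1 : u < 1) : c ≤ leftQuantile μ Y u := by
  have hu0 : 0 < u := measureReal_nonneg.trans_lt hu
  by_contra! hlt
  have hsub : μ.real {ω | Y ω ≤ leftQuantile μ Y u} ≤ μ.real D :=
    ENNReal.toReal_mono (measure_ne_top _ _) (measure_mono_ae (h.mono fun ω hω hYω =>
      by_contra fun hD => (hω.2 hD).not_gt (lt_of_le_of_lt hYω hlt)))
  exact (((leftQuantile_le_iff hY hu0 hu1).1 le_rfl).trans hsub).not_gt hu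

lemma setIntegral_leftQuantile_Icc_zero (h : IsLowerTail μ Y D c) (hY : Integrable Y μ)
    (hD : MeasurableSet D) :
    ∫ u in Icc 0 (μ.real D), leftQuantile μ Y u = ∫ ω in D, Y ω ∂μ := by
  set p := μ.real D
  have hp1 : p ≤ 1 := measureReal_le_one
  have hq : ∫ u in Ioo 0 1, min (leftQuantile μ Y u - c) 0
      = ∫ u in Ioo 0 p, (leftQuantile μ Y u - c) := by
    rw [setIntegral_eq_of_subset_of_ae_sdiff_eq_zero measurableSet_Ioo.nullMeasurableSet
      (Ioo_subset_Ioo_right hp1)]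
    · exact setIntegral_congr_fun measurableSet_Ioo fun u hu =>
        min_eq_left (sub_nonpos.2 (h.leftQuantile_le hY.aemeasurable hu.1 hu.2.le))
    -- at `u = p` the quantile may still lie below `c`
    · filter_upwards [compl_mem_ae_iff.2 (measure_singleton p)] with u hup ⟨hu, hu'⟩
      have hpu : p < u := lt_of_le_of_ne (le_of_not_gt fun h' => hu' ⟨hu.1, h'⟩) (Ne.symm hup)
      exact min_eq_right (sub_nonneg.2 (h.le_leftQuantile hY.aemeasurable hpu hu.2))
  have hY' : ∫ ω, min (Y ω - c) 0 ∂μ = ∫ ω in D, (Y ω - c) ∂μ := by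
    rw [← setIntegral_eq_integral_of_ae_compl_eq_zero (h.mono fun ω hω hD =>
      min_eq_right (sub_nonneg.2 (hω.2 hD)))]
    exact setIntegral_congr_ae hD (h.mono fun ω hω hD => min_eq_left (sub_nonpos.2 (hω.1 hD)))
  have hqp : IntegrableOn (leftQuantile μ Y) (Ioo 0 p) :=
    (integrableOn_leftQuantile hY).mono_set (Ioo_subset_Icc_self.trans (Icc_subset_Icc_right hp1))
  calc ∫ u in Icc 0 p, leftQuantile μ Y u
      = (∫ u in Ioo 0 p, (leftQuantile μ Y u - c)) + p * c := by
        rw [integral_Icc_eq_integral_Ioo, integral_sub hqp (integrableOn_const (by simp)),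
          setIntegral_const, Real.volume_real_Ioo_of_le measureReal_nonneg, smul_eq_mul, sub_zero]
        ring
    _ = (∫ ω, min (Y ω - c) 0 ∂μ) + p * c := by
        rw [← hq, integral_comp_leftQuantile hY.aemeasurable (g := fun x => min (x - c) 0)
          (by fun_prop)]
    _ = ∫ ω in D, Y ω ∂μ := by
        rw [hY', integral_sub hY.integrableOn (integrableOn_const (by simp)), setIntegral_const,
          smul_eq_mul]
        ring

lemma setIntegral_leftQuantile_Icc_one (h : IsLowerTail μ Y D c) (hY : Integrable Y μ)
    (hD : MeasurableSet D) :
    ∫ u in Icc (μ.real D) 1, leftQuantile μ Y u = ∫ ω in Dᶜ, Y ω ∂μ := by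
  set p := μ.real D
  have hp0 : 0 ≤ p := measureReal_nonneg
  have hq : ∫ u in Ioo 0 1, max (leftQuantile μ Y u - c) 0
      = ∫ u in Ioo p 1, (leftQuantile μ Y u - c) := by
    rw [setIntegral_eq_of_subset_of_forall_sdiff_eq_zero measurableSet_Ioo
      (Ioo_subset_Ioo_left hp0)]
    · exact setIntegral_congr_fun measurableSet_Ioo fun u hu =>
        max_eq_left (sub_nonneg.2 (h.le_leftQuantile hY.aemeasurable hu.1 hu.2))
    · rintro u ⟨hu, hu'⟩
      have hup : u ≤ p := le_of_not_gt fun h' => hu' ⟨h', hu.2⟩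
      exact max_eq_right (sub_nonpos.2 (h.leftQuantile_le hY.aemeasurable hu.1 hup))
  have hY' : ∫ ω, max (Y ω - c) 0 ∂μ = ∫ ω in Dᶜ, (Y ω - c) ∂μ := by
    rw [← setIntegral_eq_integral_of_ae_compl_eq_zero (h.mono fun ω hω hD =>
      max_eq_right (sub_nonpos.2 (hω.1 (not_not.1 hD))))]
    exact setIntegral_congr_ae hD.compl
      (h.mono fun ω hω hD => max_eq_left (sub_nonneg.2 (hω.2 hD)))
  have hqp : IntegrableOn (leftQuantile μ Y) (Ioo p 1) :=
    (integrableOn_leftQuantile hY).mono_set (Ioo_subset_Icc_self.trans (Icc_subset_Icc_left hp0))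
  calc ∫ u in Icc p 1, leftQuantile μ Y u
      = (∫ u in Ioo p 1, (leftQuantile μ Y u - c)) + (1 - p) * c := by
        rw [integral_Icc_eq_integral_Ioo, integral_sub hqp (integrableOn_const (by simp)),
          setIntegral_const, Real.volume_real_Ioo_of_le measureReal_le_one, smul_eq_mul]
        ring
    _ = (∫ ω, max (Y ω - c) 0 ∂μ) + (1 - p) * c := by
        rw [← hq, integral_comp_leftQuantile hY.aemeasurable (g := fun x => max (x - c) 0)
          (by fun_prop)]
    _ = ∫ ω in Dᶜ, Y ω ∂μ := by
        rw [hY', integral_sub hY.integrableOn (integrableOn_const (by simp)), setIntegral_const,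
          probReal_compl_eq_one_sub hD, smul_eq_mul]
        ring

end IsLowerTail

end LowerTail

section UniformTransform

variable {Ω : Type*} [MeasurableSpace Ω] {μ : Measure Ω} {Y U : Ω → ℝ}

lemma ae_mem_Ioo_of_map_eq (hU : μ.map U = volume.restrict (Icc 0 1)) :
    ∀ᵐ ω ∂μ, U ω ∈ Ioo 0 1 := by
  have hUm : AEMeasurable U μ := .of_map_ne_zero (by simp [hU, Measure.restrict_eq_zero])
  refine ae_of_ae_map hUm ?_
  rw [hU, ← Measure.restrict_congr_set Ioo_ae_eq_Icc]
  exact ae_restrict_mem measurableSet_Ioo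

variable [IsProbabilityMeasure μ]

lemma isLowerTail_setOf_le (hY : AEMeasurable Y μ) (hU : ∀ᵐ ω ∂μ, U ω ∈ Ioo 0 1)
    (hUY : ∀ᵐ ω ∂μ, leftQuantile μ Y (U ω) = Y ω) {b : ℝ} (hb : b ∈ Ioo 0 1) :
    IsLowerTail μ Y {ω | U ω ≤ b} (leftQuantile μ Y b) := by
  filter_upwards [hU, hUY] with ω hUω hYω
  rw [← hYω]
  exact ⟨fun h => monotoneOn_leftQuantile hY hUω hb h,
    fun h => monotoneOn_leftQuantile hY hb hUω (not_le.1 h).le⟩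

end UniformTransform

section TailShare

variable {Ω : Type*} {n : ℕ} {X : Ω → ℝ} {t : ℝ} {S A : Set Ω} {ω : Ω}

-- The share `Xᵢ` of the paper, with `S` for the tail event `A` and `A` for its piece `Aᵢ`.
noncomputable def tailShare (n : ℕ) (X : Ω → ℝ) (t : ℝ) (S A : Set Ω) (ω : Ω) : ℝ :=
  A.indicator (fun ω' => X ω' - t) ω + Sᶜ.indicator (fun ω' => X ω' / n) ω
    + (S \ A).indicator (fun _ => t / (n - 1)) ω

lemma tailShare_of_mem (hAS : A ⊆ S) (hω : ω ∈ A) : tailShare n X t S A ω = X ω - t := by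
  simp [tailShare, hω, hAS hω]

lemma tailShare_of_notMem (hAS : A ⊆ S) (hω : ω ∉ S) : tailShare n X t S A ω = X ω / n := by
  have hωA : ω ∉ A := fun h => hω (hAS h)
  simp [tailShare, hω, hωA]

lemma tailShare_of_mem_sdiff (hω : ω ∈ S \ A) : tailShare n X t S A ω = t / (n - 1) := by
  simp [tailShare, hω.1, hω.2]

lemma sum_tailShare {A : Fin n → Set Ω} (hn : 2 ≤ n) (hdisj : Pairwise (Function.onFun Disjoint A))
    (hunion : ⋃ i, A i = S) (ω : Ω) : ∑ i, tailShare n X t S (A i) ω = X ω := by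
  have hAS : ∀ i, A i ⊆ S := fun i => hunion ▸ subset_iUnion A i
  have hn1 : (n : ℝ) - 1 ≠ 0 := by
    have : (2 : ℝ) ≤ n := by exact_mod_cast hn
    linarith
  by_cases hω : ω ∈ S
  · obtain ⟨j, hj⟩ := mem_iUnion.1 (hunion ▸ hω)
    have hothers : ∀ i ∈ ({j}ᶜ : Finset (Fin n)), tailShare n X t S (A i) ω = t / (n - 1) :=
      fun i hi => tailShare_of_mem_sdiff ⟨hω, fun hi' => disjoint_left.1
        (hdisj (Finset.mem_compl.1 hi ∘ Finset.mem_singleton.2)) hi' hj⟩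
    rw [Fintype.sum_eq_add_sum_compl j, tailShare_of_mem (hAS j) hj, Finset.sum_congr rfl hothers,
      Finset.sum_const, Finset.card_compl, Finset.card_singleton, Fintype.card_fin, nsmul_eq_mul,
      Nat.cast_sub (by omega), Nat.cast_one]
    field_simp
    ring
  · simp only [tailShare_of_notMem (hAS _) hω, Finset.sum_const, Finset.card_univ,
      Fintype.card_fin, nsmul_eq_mul]
    field_simp

variable [MeasurableSpace Ω] {μ : Measure Ω} {c : ℝ}

lemma isLowerTail_tailShare (hn : 2 ≤ n) (hAS : A ⊆ S) (hXS : IsLowerTail μ X S c)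
    (hct : c ≤ t) (ht : 0 ≤ t) : IsLowerTail μ (tailShare n X t S A) A (c - t) := by
  have hn1 : (1 : ℝ) < n := by exact_mod_cast hn
  filter_upwards [hXS] with ω ⟨hS, hSc⟩
  refine ⟨fun hA => ?_, fun hA => ?_⟩
  · rw [tailShare_of_mem hAS hA]
    linarith [hS (hAS hA)]
  by_cases hωS : ω ∈ S
  · rw [tailShare_of_mem_sdiff ⟨hωS, hA⟩]
    have : 0 ≤ t / (n - 1) := div_nonneg ht (by linarith)
    linarith
  · rw [tailShare_of_notMem hAS hωS]
    have hc := hSc hωS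
    rcases le_or_gt 0 (X ω) with hX0 | hX0
    · linarith [div_nonneg hX0 (by linarith : (0 : ℝ) ≤ n)]
    · have : X ω ≤ X ω / n := by
        rw [le_div_iff₀ (by linarith)]
        nlinarith
      linarith

lemma isLowerTail_tailShare_union_compl (hn : 2 ≤ n) (hAS : A ⊆ S)
    (hXt : ∀ᵐ ω ∂μ, X ω ≤ t) (ht : 0 ≤ t) :
    IsLowerTail μ (tailShare n X t S A) (A ∪ Sᶜ) (t / (n - 1)) := by
  have hn1 : (1 : ℝ) < n := by exact_mod_cast hn
  filter_upwards [hXt] with ω hωt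
  refine ⟨fun hω => ?_, fun hω => ?_⟩
  · rcases hω with hA | hS
    · rw [tailShare_of_mem hAS hA]
      linarith [div_nonneg ht (by linarith : (0 : ℝ) ≤ n - 1)]
    · rw [tailShare_of_notMem hAS hS]
      calc X ω / n ≤ t / n := by gcongr
        _ ≤ t / (n - 1) := by gcongr; linarith
  · rw [tailShare_of_mem_sdiff ⟨not_not.1 fun h => hω (Or.inr h), fun h => hω (Or.inl h)⟩]

variable [IsProbabilityMeasure μ]

lemma integrable_tailShare (hX : Integrable X μ) (hS : MeasurableSet S) (hA : MeasurableSet A) :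
    Integrable (tailShare n X t S A) μ :=
  (((hX.sub (integrable_const t)).indicator hA).add ((hX.div_const _).indicator hS.compl)).add
    ((integrable_const _).indicator (hS.diff hA))

lemma avgQuantile_tailShare (hn : 2 ≤ n) (hX : Integrable X μ) (hXS : IsLowerTail μ X S c)
    (hXt : ∀ᵐ ω ∂μ, X ω ≤ t) (hct : c ≤ t) (ht : 0 ≤ t) (hS : MeasurableSet S)
    (hA : MeasurableSet A) (hAS : A ⊆ S) (hS1 : μ.real S < 1) :
    avgQuantile μ (tailShare n X t S A) (Icc 0 (μ.real A) ∪ Icc (1 - μ.real S + μ.real A) 1)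
      = (μ.real S)⁻¹ *
        (∫ ω in A, X ω ∂μ - μ.real A * t + (μ.real S - μ.real A) * (t / (n - 1))) := by
  have hAS' : μ.real A ≤ μ.real S := measureReal_mono hAS
  have hA0 : 0 ≤ μ.real A := measureReal_nonneg
  have hY := integrable_tailShare (n := n) (t := t) hX hS hA
  have hdisj : Disjoint (Icc 0 (μ.real A)) (Icc (1 - μ.real S + μ.real A) 1) :=
    disjoint_left.2 fun u hu hu' => by linarith [hu.2, hu'.1]
  have hvol : (volume (Icc 0 (μ.real A) ∪ Icc (1 - μ.real S + μ.real A) 1)).toReal = μ.real S := by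
    rw [measure_union hdisj measurableSet_Icc, Real.volume_Icc, Real.volume_Icc,
      ← ENNReal.ofReal_add (by linarith) (by linarith), ENNReal.toReal_ofReal (by linarith)]
    ring
  have hlow := (isLowerTail_tailShare hn hAS hXS hct ht).setIntegral_leftQuantile_Icc_zero hY hA
  have hup := (isLowerTail_tailShare_union_compl hn hAS hXt ht).setIntegral_leftQuantile_Icc_one
    hY (hA.union hS.compl)
  rw [measureReal_union (disjoint_compl_right.mono_left hAS) hS.compl,
    probReal_compl_eq_one_sub hS, compl_union, compl_compl, inter_comm, ← sdiff_eq,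
    setIntegral_congr_fun (hS.diff hA) fun ω hω => tailShare_of_mem_sdiff hω, setIntegral_const,
    measureReal_sdiff hAS hA, smul_eq_mul, add_comm (μ.real A)] at hup
  have hq := integrableOn_leftQuantile hY
  rw [avgQuantile, hvol, setIntegral_union hdisj measurableSet_Icc
      (hq.mono_set (Icc_subset_Icc_right (by linarith)))
      (hq.mono_set (Icc_subset_Icc_left (by linarith))), hlow,
    setIntegral_congr_fun hA fun ω hω => tailShare_of_mem hAS hω,
    integral_sub hX.integrableOn (integrableOn_const (measure_ne_top _ _)), setIntegral_const,
    smul_eq_mul, hup]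

lemma sum_avgQuantile_tailShare {A : Fin n → Set Ω} (hn : 2 ≤ n) (hX : Integrable X μ)
    (hXS : IsLowerTail μ X S c) (hXt : ∀ᵐ ω ∂μ, X ω ≤ t) (hct : c ≤ t) (ht : 0 ≤ t)
    (hA : ∀ i, MeasurableSet (A i)) (hdisj : Pairwise (Function.onFun Disjoint A))
    (hunion : ⋃ i, A i = S) (hS1 : μ.real S < 1) :
    ∑ i, avgQuantile μ (tailShare n X t S (A i))
        (Icc 0 (μ.real (A i)) ∪ Icc (1 - μ.real S + μ.real (A i)) 1)
      = avgQuantile μ X (Icc 0 (μ.real S)) := by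
  have hS : MeasurableSet S := hunion ▸ .iUnion hA
  have hn1 : (n : ℝ) - 1 ≠ 0 := by
    have : (2 : ℝ) ≤ n := by exact_mod_cast hn
    linarith
  have hint : ∑ i, ∫ ω in A i, X ω ∂μ = ∫ ω in S, X ω ∂μ := by
    rw [← hunion, integral_iUnion_fintype hA hdisj fun _ => hX.integrableOn]
  have hmeas : ∑ i, μ.real (A i) = μ.real S := by
    rw [← hunion, measureReal_iUnion_fintype hdisj hA]
  rw [Finset.sum_congr rfl fun i _ => avgQuantile_tailShare hn hX hXS hXt hct ht hS (hA i)
      (hunion ▸ subset_iUnion A i) hS1,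
    ← Finset.mul_sum, avgQuantile, Real.volume_Icc, sub_zero,
    ENNReal.toReal_ofReal measureReal_nonneg, hXS.setIntegral_leftQuantile_Icc_zero hX hS,
    Finset.sum_add_distrib, Finset.sum_sub_distrib, hint, ← Finset.sum_mul, hmeas,
    ← Finset.sum_mul, Finset.sum_sub_distrib, hmeas, Finset.sum_const, Finset.card_univ,
    Fintype.card_fin, nsmul_eq_mul]
  congr 1
  field_simp
  ring

end TailShare

theorem stmt8_general {Ω : Type*} [MeasurableSpace Ω] (μ : Measure Ω) [IsProbabilityMeasure μ]
    (n : ℕ) (hn : 2 ≤ n) (X : Ω → ℝ) (hX : Integrable X μ)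
    (hbdd : ∃ C : ℝ, ∀ᵐ ω ∂μ, X ω ≤ C)
    (β : Fin n → ℝ)
    (B : ℝ) (hBdef : B = ∑ i, β i) (hB : B ∈ Set.Ioo (0 : ℝ) 1)
    (t : ℝ) (ht : max (essSup X μ) 0 ≤ t)
    (U : Ω → ℝ) (hUlaw : Measure.map U μ = volume.restrict (Set.Icc (0 : ℝ) 1))
    (hUX : ∀ᵐ ω ∂μ, leftQuantile μ X (U ω) = X ω)
    (A : Fin n → Set Ω) (hAmeas : ∀ i, MeasurableSet (A i))
    (hdisj : Pairwise (Function.onFun Disjoint A))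
    (hunion : (⋃ i, A i) = {ω | U ω ≤ B})
    (hAprob : ∀ i, (μ (A i)).toReal = β i) :
    (∀ ω, (∑ i,
        (Set.indicator (A i) (fun ω' => X ω' - t) ω
          + Set.indicator {ω' | U ω' ≤ B}ᶜ (fun ω' => X ω' / n) ω
          + Set.indicator ({ω' | U ω' ≤ B} \ A i) (fun _ => t / (n - 1)) ω)) = X ω)
    ∧ (∑ i, avgQuantile μ
          (fun ω => Set.indicator (A i) (fun ω' => X ω' - t) ω
            + Set.indicator {ω' | U ω' ≤ B}ᶜ (fun ω' => X ω' / n) ω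
            + Set.indicator ({ω' | U ω' ≤ B} \ A i) (fun _ => t / (n - 1)) ω)
          (Set.Icc 0 (β i) ∪ Set.Icc (1 - B + β i) 1))
        = avgQuantile μ X (Set.Icc 0 B) := by
  set S := {ω | U ω ≤ B}
  have hSB : μ.real S = B := by
    rw [← hunion, measureReal_iUnion_fintype hdisj hAmeas, hBdef]
    exact Finset.sum_congr rfl fun i _ => hAprob i
  obtain rfl : β = fun i => μ.real (A i) := funext fun i => (hAprob i).symm
  have ht0 : 0 ≤ t := (le_max_right _ _).trans ht
  have hXt : ∀ᵐ ω ∂μ, X ω ≤ t := by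
    obtain ⟨C, hC⟩ := hbdd
    exact (ae_le_essSup (isBoundedUnder_of_eventually_le hC)).mono fun ω hω =>
      hω.trans ((le_max_left _ _).trans ht)
  have hXS : IsLowerTail μ X S (leftQuantile μ X B) :=
    isLowerTail_setOf_le hX.aemeasurable (ae_mem_Ioo_of_map_eq hUlaw) hUX hB
  have hct : leftQuantile μ X B ≤ t := by
    have hFt : μ.real {ω | X ω ≤ t} = 1 :=
      (measureReal_congr (ae_eq_univ.2 hXt)).trans probReal_univ
    exact leftQuantile_le_of_le_measureReal hX.aemeasurable hB.1 (hFt ▸ hB.2.le)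
  refine ⟨sum_tailShare hn hdisj hunion, ?_⟩
  rw [← hSB]
  exact sum_avgQuantile_tailShare hn hX hXS hXt hct ht0 hAmeas hdisj hunion (hSB ▸ hB.2)

theorem stmt8 {Ω : Type*} [MeasurableSpace Ω] (μ : Measure Ω) [IsProbabilityMeasure μ]
    (n : ℕ) (hn : 2 ≤ n) (X : Ω → ℝ) (hX : Integrable X μ)
    (hbdd : ∃ C : ℝ, ∀ᵐ ω ∂μ, X ω ≤ C)
    (β : Fin n → ℝ) (hβ : ∀ i, β i ∈ Set.Ioo (0 : ℝ) 1)
    (B : ℝ) (hBdef : B = ∑ i, β i) (hB : B ∈ Set.Ioo (0 : ℝ) 1)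
    (t : ℝ) (ht : max (essSup X μ) 0 ≤ t)
    (U : Ω → ℝ) (hUlaw : Measure.map U μ = volume.restrict (Set.Icc (0 : ℝ) 1))
    (hUX : ∀ᵐ ω ∂μ, leftQuantile μ X (U ω) = X ω)
    (A : Fin n → Set Ω) (hAmeas : ∀ i, MeasurableSet (A i))
    (hdisj : Pairwise (Function.onFun Disjoint A))
    (hunion : (⋃ i, A i) = {ω | U ω ≤ B})
    (hAprob : ∀ i, (μ (A i)).toReal = β i) :
    (∀ ω, (∑ i,
        (Set.indicator (A i) (fun ω' => X ω' - t) ω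
          + Set.indicator {ω' | U ω' ≤ B}ᶜ (fun ω' => X ω' / n) ω
          + Set.indicator ({ω' | U ω' ≤ B} \ A i) (fun _ => t / (n - 1)) ω)) = X ω)
    ∧ (∑ i, avgQuantile μ
          (fun ω => Set.indicator (A i) (fun ω' => X ω' - t) ω
            + Set.indicator {ω' | U ω' ≤ B}ᶜ (fun ω' => X ω' / n) ω
            + Set.indicator ({ω' | U ω' ≤ B} \ A i) (fun _ => t / (n - 1)) ω)
          (Set.Icc 0 (β i) ∪ Set.Icc (1 - B + β i) 1))
        = avgQuantile μ X (Set.Icc 0 B) :=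
  stmt8_general μ n hn X hX hbdd β B hBdef hB t ht U hUlaw hUX A hAmeas hdisj hunion hAprob
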